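/- arXiv:math/0609687 — 2 statements merged into one kernel-verified Lean document; each statement's English description precedes it below -/
import Mathlib

section
/- Let f : ℂ → ℂ be entire with |f(z)| ≤ a·exp(b|z|) for constants a > 0 and 0 < b < π. If f(u) = 0 for all u ∈ ℤ≥0, then f ≡ 0. -/
/-!
Off the integers put `q = f / sin (π z)`. On `Re z ≥ 0` it satisfies
`‖q z‖ ≤ C exp (b ‖z‖ - π |Im z|)`: away from the real axis because `‖sin (π z)‖` grows like
`exp (π |Im z|) / 2`, and near it by the maximum modulus principle on unit squares centred at the
integers, whose boundaries keep `‖sin (π z)‖ ≥ 1`. The zeros of `sin (π z)` in the half-plane are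
simple and are zeros of `f`, so `q` extends holomorphically there.

Multiply `q` by `(z + 1) ^ (-s (z + 1))` with `s π / 2 = π - b`. This factor is at most
`exp (s π / 2 |Im z|)` on the half-plane and decays superexponentially along `ℝ₊`, so the product
is bounded on the imaginary axis, of exponential type in the half-plane and superexponentially
decaying along `ℝ₊`. By Phragmén–Lindelöf it vanishes; hence `f` vanishes on the right half-plane,
and so everywhere.
-/

open Complex Filter Topology Set Asymptotics
open scoped Real

theorem Complex.norm_sin_sq (z : ℂ) : ‖sin z‖ ^ 2 = Real.sin z.re ^ 2 + Real.sinh z.im ^ 2 := by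
  conv_lhs => rw [← re_add_im z, sin_add_mul_I]
  rw [← ofReal_sin, ← ofReal_cos, ← ofReal_cosh, ← ofReal_sinh, Complex.sq_norm, normSq_apply]
  simp only [add_re, add_im, mul_re, mul_im, ofReal_re, ofReal_im, I_re, I_im]
  linear_combination
    Real.sin z.re ^ 2 * Real.cosh_sq z.im + Real.sinh z.im ^ 2 * Real.sin_sq_add_cos_sq z.re

theorem Complex.abs_sinh_im_le_norm_sin (z : ℂ) : |Real.sinh z.im| ≤ ‖sin z‖ :=
  abs_le_of_sq_le_sq (by nlinarith [norm_sin_sq z, sq_nonneg (Real.sin z.re)]) (norm_nonneg _)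

theorem Complex.abs_sin_re_le_norm_sin (z : ℂ) : |Real.sin z.re| ≤ ‖sin z‖ :=
  abs_le_of_sq_le_sq (by nlinarith [norm_sin_sq z, sq_nonneg (Real.sinh z.im)]) (norm_nonneg _)

lemma sinh_pi_mul_abs_im_le_norm_sin (z : ℂ) : Real.sinh (π * |z.im|) ≤ ‖sin (π * z)‖ := by
  simpa [Real.abs_sinh, abs_mul, abs_of_pos Real.pi_pos] using abs_sinh_im_le_norm_sin (π * z)

lemma exp_div_four_le_norm_sin_pi_mul {z : ℂ} (h : 1 / 2 ≤ |z.im|) :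
    Real.exp (π * |z.im|) / 4 ≤ ‖sin (π * z)‖ := by
  refine le_trans ?_ (sinh_pi_mul_abs_im_le_norm_sin z)
  have hπ : 1 ≤ π * |z.im| := by nlinarith [Real.pi_gt_three]
  have h2 : 2 ≤ Real.exp (π * |z.im|) := by linarith [Real.add_one_le_exp (π * |z.im|)]
  have h1 : Real.exp (-(π * |z.im|)) * Real.exp (π * |z.im|) = 1 := by
    rw [← Real.exp_add, neg_add_cancel, Real.exp_zero]
  rw [Real.sinh_eq]
  nlinarith [Real.exp_pos (-(π * |z.im|))]

lemma one_le_norm_sin_pi_mul_of_half_le_abs_im {z : ℂ} (h : 1 / 2 ≤ |z.im|) :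
    1 ≤ ‖sin (π * z)‖ := by
  refine le_trans ?_ (sinh_pi_mul_abs_im_le_norm_sin z)
  have hπ : 1 ≤ π * |z.im| := by nlinarith [Real.pi_gt_three]
  exact hπ.trans (Real.self_le_sinh_iff.2 (by positivity))

lemma one_le_norm_sin_pi_mul_of_re_eq {z : ℂ} (n : ℤ) (h : z.re = n + 1 / 2) :
    1 ≤ ‖sin (π * z)‖ := by
  have hcos : Real.cos (π * z.re) = 0 := Real.cos_eq_zero_iff.2 ⟨n, by rw [h]; ring⟩
  have hsin : |Real.sin (π * z.re)| = 1 :=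
    (sq_eq_sq₀ (abs_nonneg _) zero_le_one).1 (by rw [sq_abs, Real.sin_sq, hcos]; ring)
  simpa [hsin] using abs_sin_re_le_norm_sin (π * z)

noncomputable def removableDiv (g h : ℂ → ℂ) (z : ℂ) : ℂ :=
  if h z = 0 then deriv g z / deriv h z else g z / h z

lemma removableDiv_of_ne_zero {g h : ℂ → ℂ} {z : ℂ} (hz : h z ≠ 0) :
    removableDiv g h z = g z / h z :=
  if_neg hz

lemma Differentiable.dslope {φ : ℂ → ℂ} (hφ : Differentiable ℂ φ) (c : ℂ) :
    Differentiable ℂ (dslope φ c) := fun z =>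
  ((Complex.differentiableOn_dslope univ_mem).2 hφ.differentiableOn z trivial).differentiableAt
    univ_mem

lemma differentiableAt_removableDiv {g h : ℂ → ℂ} {c : ℂ} (hg : Differentiable ℂ g)
    (hh : Differentiable ℂ h) (hc : h c = 0 → g c = 0 ∧ deriv h c ≠ 0) :
    DifferentiableAt ℂ (removableDiv g h) c := by
  by_cases hhc : h c = 0
  · obtain ⟨hgc, hh'c⟩ := hc hhc
    have hne : ∀ᶠ z in 𝓝 c, dslope h c z ≠ 0 :=
      (hh.dslope c c).continuousAt.eventually_ne (by rwa [dslope_same])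
    have heq : removableDiv g h =ᶠ[𝓝 c] fun z => dslope g c z / dslope h c z := by
      filter_upwards [hne] with z hz
      rcases eq_or_ne z c with rfl | hzc
      · simp [removableDiv, hhc, dslope_same]
      · have hhz : h z = (z - c) * dslope h c z := by
          rw [← smul_eq_mul, sub_smul_dslope, hhc, sub_zero]
        have hgz : g z = (z - c) * dslope g c z := by
          rw [← smul_eq_mul, sub_smul_dslope, hgc, sub_zero]
        have hzc' : z - c ≠ 0 := sub_ne_zero.2 hzc
        rw [removableDiv_of_ne_zero (by rw [hhz]; exact mul_ne_zero hzc' hz), hgz, hhz,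
          mul_div_mul_left _ _ hzc']
    exact ((hg.dslope c c).div (hh.dslope c c) (by rwa [dslope_same])).congr_of_eventuallyEq heq
  · have heq : removableDiv g h =ᶠ[𝓝 c] fun z => g z / h z := by
      filter_upwards [(hh c).continuousAt.eventually_ne hhc] with z hz
      exact removableDiv_of_ne_zero hz
    exact ((hg c).div (hh c) hhc).congr_of_eventuallyEq heq

noncomputable def divSinPi (f : ℂ → ℂ) : ℂ → ℂ := removableDiv f fun z => sin (π * z)

lemma divSinPi_of_sin_ne_zero {f : ℂ → ℂ} {z : ℂ} (hz : sin (π * z) ≠ 0) :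
    divSinPi f z = f z / sin (π * z) :=
  removableDiv_of_ne_zero hz

lemma eq_zero_of_sin_pi_mul_eq_zero {f : ℂ → ℂ} (hzero : ∀ n : ℕ, f n = 0) {z : ℂ}
    (hre : -1 < z.re) (hs : sin (π * z) = 0) : f z = 0 := by
  obtain ⟨k, hk⟩ := sin_eq_zero_iff.1 hs
  have hzk : z = k := mul_left_cancel₀ (ofReal_ne_zero.2 Real.pi_ne_zero) (hk.trans (mul_comm _ _))
  have hk0 : 0 ≤ k := by
    have : (-1 : ℝ) < k := by simpa [hzk] using hre
    exact Int.le_of_sub_one_lt (by exact_mod_cast this)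
  lift k to ℕ using hk0
  rw [hzk]
  exact_mod_cast hzero k

lemma divSinPi_mul_sin_pi_mul {f : ℂ → ℂ} (hzero : ∀ n : ℕ, f n = 0) {z : ℂ} (hre : -1 < z.re) :
    divSinPi f z * sin (π * z) = f z := by
  by_cases hs : sin (π * z) = 0
  · rw [hs, mul_zero, eq_zero_of_sin_pi_mul_eq_zero hzero hre hs]
  · rw [divSinPi_of_sin_ne_zero hs, div_mul_cancel₀ _ hs]

lemma differentiableAt_divSinPi {f : ℂ → ℂ} (hf : Differentiable ℂ f)
    (hzero : ∀ n : ℕ, f n = 0) {z : ℂ} (hre : -1 < z.re) : DifferentiableAt ℂ (divSinPi f) z := by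
  refine differentiableAt_removableDiv hf (by fun_prop) fun hs =>
    ⟨eq_zero_of_sin_pi_mul_eq_zero hzero hre hs, ?_⟩
  have hderiv : deriv (fun z => sin (π * z)) z = cos (π * z) * π :=
    ((hasDerivAt_sin _).comp z ((hasDerivAt_id z).const_mul (π : ℂ))).deriv.trans (by simp)
  have hcos : cos (π * z) ^ 2 = 1 := by
    linear_combination sin_sq_add_cos_sq (π * z) - sin (π * z) * hs
  rw [hderiv]
  exact mul_ne_zero (fun h => by simp [h] at hcos) (ofReal_ne_zero.2 Real.pi_ne_zero)

lemma norm_divSinPi_le_of_half_le_abs_im {f : ℂ → ℂ} {a b : ℝ}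
    (hbd : ∀ z : ℂ, ‖f z‖ ≤ a * Real.exp (b * ‖z‖)) {z : ℂ} (him : 1 / 2 ≤ |z.im|) :
    ‖divSinPi f z‖ ≤ 4 * a * Real.exp (b * ‖z‖ - π * |z.im|) := by
  have hsin := exp_div_four_le_norm_sin_pi_mul him
  have hsin0 : sin (π * z) ≠ 0 := norm_pos_iff.1 (lt_of_lt_of_le (by positivity) hsin)
  rw [divSinPi_of_sin_ne_zero hsin0, norm_div, Real.exp_sub]
  calc ‖f z‖ / ‖sin (π * z)‖ ≤ a * Real.exp (b * ‖z‖) / (Real.exp (π * |z.im|) / 4) :=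
        div_le_div₀ ((norm_nonneg _).trans (hbd z)) (hbd z) (by positivity) hsin
    _ = 4 * a * (Real.exp (b * ‖z‖) / Real.exp (π * |z.im|)) := by ring

def unitSquareAt (c : ℝ) : Set ℂ := Ioo (c - 1 / 2) (c + 1 / 2) ×ℂ Ioo (-(1 / 2)) (1 / 2)

lemma closure_unitSquareAt (c : ℝ) :
    closure (unitSquareAt c) = Icc (c - 1 / 2) (c + 1 / 2) ×ℂ Icc (-(1 / 2)) (1 / 2) := by
  rw [unitSquareAt, closure_reProdIm, closure_Ioo (by linarith), closure_Ioo (by norm_num)]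

lemma norm_sub_le_two_of_mem_closure_unitSquareAt {c : ℝ} {w z : ℂ}
    (hw : w ∈ closure (unitSquareAt c)) (hz : z ∈ closure (unitSquareAt c)) : ‖w - z‖ ≤ 2 := by
  rw [closure_unitSquareAt] at hw hz
  calc ‖w - z‖ ≤ |(w - z).re| + |(w - z).im| := norm_le_abs_re_add_abs_im _
    _ ≤ 1 + 1 := by
      simp only [sub_re, sub_im]
      gcongr <;> refine abs_le.2 ⟨?_, ?_⟩ <;>
        linarith [hw.1.1, hw.1.2, hw.2.1, hw.2.2, hz.1.1, hz.1.2, hz.2.1, hz.2.2]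
    _ = 2 := by norm_num

lemma one_le_norm_sin_pi_mul_of_mem_frontier {n : ℤ} {w : ℂ}
    (hw : w ∈ frontier (unitSquareAt n)) : 1 ≤ ‖sin (π * w)‖ := by
  rw [unitSquareAt, frontier_reProdIm, frontier_Ioo (by norm_num), frontier_Ioo (by linarith)] at hw
  rcases hw with ⟨-, him⟩ | ⟨hre, -⟩
  · refine one_le_norm_sin_pi_mul_of_half_le_abs_im (le_of_eq ?_)
    rcases him with h | h <;> simp [show w.im = _ from h]
  · rcases hre with h | h
    · exact one_le_norm_sin_pi_mul_of_re_eq (n - 1) (by push_cast; linarith [show w.re = _ from h])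
    · exact one_le_norm_sin_pi_mul_of_re_eq n h

lemma norm_divSinPi_le_of_abs_im_le {f : ℂ → ℂ} {a b : ℝ} (hf : Differentiable ℂ f)
    (hzero : ∀ n : ℕ, f n = 0) (hbd : ∀ z : ℂ, ‖f z‖ ≤ a * Real.exp (b * ‖z‖)) {z : ℂ}
    (hre : 0 ≤ z.re) (him : |z.im| ≤ 1 / 2) :
    ‖divSinPi f z‖ ≤ a * Real.exp (b * ‖z‖ + 2 * |b|) := by
  have ha : 0 ≤ a := by simpa using (norm_nonneg _).trans (hbd 0)
  obtain ⟨n, hn_def⟩ : ∃ n : ℤ, n = round z.re := ⟨_, rfl⟩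
  have hn : (0 : ℝ) ≤ n := by
    rw [hn_def, round_eq]; exact_mod_cast Int.floor_nonneg.2 (by linarith)
  have hz : z ∈ closure (unitSquareAt n) := by
    have := abs_le.1 (hn_def ▸ abs_sub_round z.re)
    rw [closure_unitSquareAt]
    exact ⟨⟨by linarith, by linarith⟩, abs_le.1 him⟩
  have hU : Bornology.IsBounded (unitSquareAt n) :=
    (Metric.isBounded_Ioo _ _).reProdIm (Metric.isBounded_Ioo _ _)
  have hd : DiffContOnCl ℂ (divSinPi f) (unitSquareAt n) := by
    refine DifferentiableOn.diffContOnCl fun w hw =>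
      (differentiableAt_divSinPi hf hzero ?_).differentiableWithinAt
    rw [closure_unitSquareAt] at hw
    linarith [hw.1.1]
  refine Complex.norm_le_of_forall_mem_frontier_norm_le hU hd (fun w hw => ?_) hz
  have hsin := one_le_norm_sin_pi_mul_of_mem_frontier hw
  have hdist := norm_sub_le_two_of_mem_closure_unitSquareAt (frontier_subset_closure hw) hz
  have hexp : b * ‖w‖ ≤ b * ‖z‖ + 2 * |b| :=
    calc b * ‖w‖ = b * ‖z‖ + b * (‖w‖ - ‖z‖) := by ring
      _ ≤ b * ‖z‖ + |b| * |‖w‖ - ‖z‖| := by rw [← abs_mul]; gcongr; exact le_abs_self _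
      _ ≤ b * ‖z‖ + 2 * |b| := by
        nlinarith [abs_nonneg b, (abs_norm_sub_norm_le w z).trans hdist]
  calc ‖divSinPi f w‖ = ‖f w‖ / ‖sin (π * w)‖ := by
        rw [divSinPi_of_sin_ne_zero (norm_pos_iff.1 (one_pos.trans_le hsin)), norm_div]
    _ ≤ ‖f w‖ := div_le_self (norm_nonneg _) hsin
    _ ≤ a * Real.exp (b * ‖w‖) := hbd w
    _ ≤ a * Real.exp (b * ‖z‖ + 2 * |b|) := by gcongr

lemma exists_norm_divSinPi_le {f : ℂ → ℂ} {a b : ℝ} (hf : Differentiable ℂ f)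
    (hzero : ∀ n : ℕ, f n = 0) (hbd : ∀ z : ℂ, ‖f z‖ ≤ a * Real.exp (b * ‖z‖)) :
    ∃ C, ∀ z : ℂ, 0 ≤ z.re → ‖divSinPi f z‖ ≤ C * Real.exp (b * ‖z‖ - π * |z.im|) := by
  have ha : 0 ≤ a := by simpa using (norm_nonneg _).trans (hbd 0)
  refine ⟨4 * a * Real.exp (2 * |b| + π / 2), fun z hre => ?_⟩
  rcases le_total (1 / 2) |z.im| with him | him
  · calc ‖divSinPi f z‖ ≤ 4 * a * Real.exp (b * ‖z‖ - π * |z.im|) :=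
          norm_divSinPi_le_of_half_le_abs_im hbd him
      _ ≤ 4 * a * Real.exp (2 * |b| + π / 2) * Real.exp (b * ‖z‖ - π * |z.im|) := by
          have : 4 * a ≤ 4 * a * Real.exp (2 * |b| + π / 2) :=
            le_mul_of_one_le_right (by positivity) (Real.one_le_exp (by positivity))
          gcongr
  · calc ‖divSinPi f z‖ ≤ a * Real.exp (b * ‖z‖ + 2 * |b|) :=
          norm_divSinPi_le_of_abs_im_le hf hzero hbd hre him
      _ ≤ 4 * a * Real.exp (2 * |b| + π / 2 + (b * ‖z‖ - π * |z.im|)) := by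
          gcongr ?_ * Real.exp ?_
          · linarith
          · nlinarith [Real.pi_pos]
      _ = 4 * a * Real.exp (2 * |b| + π / 2) * Real.exp (b * ‖z‖ - π * |z.im|) := by
          rw [Real.exp_add]; ring

noncomputable def selfPowWeight (s : ℝ) (z : ℂ) : ℂ := exp (-(s * ((z + 1) * log (z + 1))))

lemma differentiableAt_selfPowWeight (s : ℝ) {z : ℂ} (hz : -1 < z.re) :
    DifferentiableAt ℂ (selfPowWeight s) z := by
  have hlog : DifferentiableAt ℂ (fun z => log (z + 1)) z :=
    (differentiableAt_log (.inl (by simp; linarith))).comp z (differentiableAt_id.add_const 1)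
  exact (((differentiableAt_id.add_const 1).mul hlog).const_mul _).neg.cexp

lemma norm_selfPowWeight_le {s : ℝ} (hs : 0 ≤ s) {z : ℂ} (hz : 0 ≤ z.re) :
    ‖selfPowWeight s z‖ ≤ Real.exp (s * (π / 2) * |z.im|) := by
  have hlog : 0 ≤ Real.log ‖z + 1‖ :=
    Real.log_nonneg ((by simp; linarith : 1 ≤ (z + 1).re).trans (re_le_norm _))
  have harg : |arg (z + 1)| ≤ π / 2 := abs_arg_le_pi_div_two_iff.2 (by simp; linarith)
  have hre : ((z + 1) * log (z + 1)).re = (z.re + 1) * Real.log ‖z + 1‖ - z.im * arg (z + 1) := by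
    simp [mul_re, log_re, log_im]
  rw [selfPowWeight, norm_exp, neg_re, re_ofReal_mul, hre, Real.exp_le_exp]
  have : z.im * arg (z + 1) ≤ |z.im| * (π / 2) :=
    (le_abs_self _).trans (by rw [abs_mul]; gcongr)
  nlinarith [mul_nonneg (by linarith : 0 ≤ z.re + 1) hlog]

lemma norm_selfPowWeight_ofReal (s : ℝ) {x : ℝ} (hx : 0 ≤ x) :
    ‖selfPowWeight s x‖ = Real.exp (-(s * ((x + 1) * Real.log (x + 1)))) := by
  rw [selfPowWeight, ← ofReal_one, ← ofReal_add, ← ofReal_log (by linarith), ← ofReal_mul,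
    ← ofReal_mul, ← ofReal_neg, norm_exp, ofReal_re]

lemma tendsto_mul_sub_mul_mul_log_atBot {s : ℝ} (hs : 0 < s) (c : ℝ) :
    Tendsto (fun x => c * x - s * ((x + 1) * Real.log (x + 1))) atTop atBot := by
  have h1 : Tendsto (fun x : ℝ => x + 1) atTop atTop := tendsto_atTop_add_const_right _ 1 tendsto_id
  have h2 : Tendsto (fun x : ℝ => c - s * Real.log (x + 1)) atTop atBot :=
    tendsto_atBot_add_const_left _ c
      (tendsto_neg_atTop_atBot.comp ((Real.tendsto_log_atTop.comp h1).const_mul_atTop hs))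
  refine tendsto_atBot_add_const_right _ (-c) (h1.atTop_mul_atBot₀ h2) |>.congr fun x => ?_
  ring

lemma superpolynomialDecay_exp_mul_sub_mul_mul_log {s : ℝ} (hs : 0 < s) (c : ℝ) :
    SuperpolynomialDecay atTop Real.exp
      fun x => Real.exp (c * x - s * ((x + 1) * Real.log (x + 1))) := by
  intro n
  refine (Real.tendsto_exp_atBot.comp (tendsto_mul_sub_mul_mul_log_atBot hs (n + c))).congr
    fun x => ?_
  rw [Function.comp_apply, ← Real.exp_nat_mul, ← Real.exp_add]
  ring_nf

lemma norm_mul_selfPowWeight_le {g : ℂ → ℂ} {C b c : ℝ} (hbc : b ≤ c)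
    (hbd : ∀ z : ℂ, 0 ≤ z.re → ‖g z‖ ≤ C * Real.exp (b * ‖z‖ - c * |z.im|)) {z : ℂ}
    (hz : 0 ≤ z.re) :
    ‖g z * selfPowWeight (2 * (c - b) / π) z‖ ≤ C * Real.exp (b * ‖z‖ - b * |z.im|) := by
  have hs : 2 * (c - b) / π * (π / 2) = c - b := by field_simp
  rw [norm_mul]
  calc ‖g z‖ * ‖selfPowWeight (2 * (c - b) / π) z‖
      ≤ C * Real.exp (b * ‖z‖ - c * |z.im|) * Real.exp ((c - b) * |z.im|) := by
        have hw := norm_selfPowWeight_le (s := 2 * (c - b) / π) (by bound) hz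
        rw [hs] at hw
        exact mul_le_mul (hbd z hz) hw (norm_nonneg _)
          ((norm_nonneg _).trans (hbd z hz))
    _ = C * Real.exp (b * ‖z‖ - b * |z.im|) := by rw [mul_assoc, ← Real.exp_add]; ring_nf

theorem eqOn_zero_of_norm_le_exp_sub_mul_abs_im {g : ℂ → ℂ} {C b c : ℝ} (hbc : b < c)
    (hd : ∀ z : ℂ, 0 ≤ z.re → DifferentiableAt ℂ g z)
    (hbd : ∀ z : ℂ, 0 ≤ z.re → ‖g z‖ ≤ C * Real.exp (b * ‖z‖ - c * |z.im|)) :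
    EqOn g 0 {z | 0 ≤ z.re} := by
  set s := 2 * (c - b) / π
  have hs : 0 < s := by bound
  have hC : 0 ≤ C := by simpa using (norm_nonneg _).trans (hbd 0 le_rfl)
  set G := fun z => g z * selfPowWeight s z
  have hG (z : ℂ) (hz : 0 ≤ z.re) : ‖G z‖ ≤ C * Real.exp (b * ‖z‖ - b * |z.im|) :=
    norm_mul_selfPowWeight_le hbc.le hbd hz
  have hGd : DiffContOnCl ℂ G {z | 0 < z.re} := by
    refine DifferentiableOn.diffContOnCl fun z hz => ?_
    rw [closure_setOfPred_lt_re] at hz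
    exact ((hd z hz).mul (differentiableAt_selfPowWeight s (by linarith [hz.out])))
      |>.differentiableWithinAt
  have hgrowth : ∃ c < (2 : ℝ), ∃ B,
      G =O[Bornology.cobounded ℂ ⊓ 𝓟 {z | 0 < z.re}] fun z => Real.exp (B * ‖z‖ ^ c) := by
    refine ⟨1, one_lt_two, |b|, IsBigO.of_bound C <| eventually_inf_principal.2 <|
      .of_forall fun z (hz : 0 < z.re) => ?_⟩
    rw [Real.norm_of_nonneg (Real.exp_pos _).le, Real.rpow_one]
    refine (hG z hz.le).trans ?_
    gcongr
    nlinarith [abs_im_le_norm z, abs_nonneg z.im, le_abs_self b, neg_abs_le b]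
  have hdecay : SuperpolynomialDecay atTop Real.exp fun x => ‖G x‖ := by
    refine ((superpolynomialDecay_exp_mul_sub_mul_mul_log hs b).const_mul C)
      |>.trans_eventually_abs_le ?_
    filter_upwards [eventually_ge_atTop 0] with x hx
    have hgx : ‖g x‖ ≤ C * Real.exp (b * x) := by
      simpa [abs_of_nonneg hx] using hbd x (by simpa using hx)
    rw [Function.comp_apply, Function.comp_apply, abs_norm, norm_mul,
      norm_selfPowWeight_ofReal _ hx, sub_eq_add_neg, Real.exp_add, ← mul_assoc C]
    exact (le_abs_self _).trans' (by gcongr)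
  have himag : ∃ C, ∀ y : ℝ, ‖G (y * I)‖ ≤ C := ⟨C, fun y => by simpa using hG (y * I) (by simp)⟩
  intro z hz
  simpa [G, exp_ne_zero, selfPowWeight] using
    PhragmenLindelof.eq_zero_on_right_half_plane_of_superexponential_decay hGd hgrowth hdecay
      himag hz

theorem carlson_entire_general (f : ℂ → ℂ) (a b : ℝ)
    (hbπ : b < Real.pi) (hf : Differentiable ℂ f)
    (hbd : ∀ z : ℂ, ‖f z‖ ≤ a * Real.exp (b * ‖z‖))
    (hz : ∀ n : ℕ, f (n : ℂ) = 0) :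
    ∀ z : ℂ, f z = 0 := by
  obtain ⟨C, hC⟩ := exists_norm_divSinPi_le hf hz hbd
  have hquot : EqOn (divSinPi f) 0 {z | 0 ≤ z.re} :=
    eqOn_zero_of_norm_le_exp_sub_mul_abs_im hbπ
      (fun z hre => differentiableAt_divSinPi hf hz (by linarith)) hC
  have hnhds : f =ᶠ[𝓝 1] 0 := by
    filter_upwards [(isOpen_lt continuous_const continuous_re).mem_nhds (by simp : (0 : ℝ) < re 1)]
      with z (hre : 0 < z.re)
    rw [← divSinPi_mul_sin_pi_mul hz (by linarith), hquot hre.le, Pi.zero_apply, zero_mul]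
  exact fun z => (hf.differentiableOn.analyticOnNhd isOpen_univ)
    |>.eqOn_zero_of_preconnected_of_eventuallyEq_zero isPreconnected_univ (mem_univ 1) hnhds
      (mem_univ z)

/-- Carlson's theorem (specialization): an entire function of exponential type
less than `π` vanishing at all nonnegative integers is identically zero. -/
theorem carlson_entire (f : ℂ → ℂ) (a b : ℝ) (ha : 0 < a) (hb0 : 0 < b)
    (hbπ : b < Real.pi) (hf : Differentiable ℂ f)
    (hbd : ∀ z : ℂ, ‖f z‖ ≤ a * Real.exp (b * ‖z‖))
    (hz : ∀ n : ℕ, f (n : ℂ) = 0) :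
    ∀ z : ℂ, f z = 0 :=
  carlson_entire_general f a b hbπ hf hbd hz
end

section
/- Let A be an n×n complex matrix whose eigenvalues are all positive real numbers. Then for each vector v, the exponential-polynomial expression for Σ_{j=0}^{u-1} A^j v, written as Σ_{s,t} a_{st} λ_s^u u^t with λ_s > 0, extends to an analytic function of u ∈ ℂ given by replacing λ_s^u with exp(u log λ_s); this extension satisfies a bound ‖F(u)‖ ≤ a·exp(b|u|) with b = max_s |log λ_s| + n. -/
/-!
Border `A` with the column `v`: the last column of `B ^ m`, `B = [[A, v], [0, 1]]`, is
`(∑_{j<m} A ^ j v, 1)`, and `spec B = spec A ∪ {1}`. For any matrix with nonzero spectrum, split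
a vector into generalized eigenvectors; on the one for `μ`, `(μ + N) ^ m` with `N` nilpotent
expands binomially, and `C(m, t) μ ^ (m - t) = μ ^ m · μ ⁻ᵗ · descPochhammer_t(m) / t!` is `μ ^ m`
times a polynomial in `m` because `μ ≠ 0`. So `m ↦ B ^ m w` is an exponential polynomial
`∑ μ ^ m m ^ k a_{μ,k}` over the (here positive real) spectrum. Replacing `μ ^ u` by
`exp (u log μ)` gives an entire function, and `|exp (u log μ)| ≤ exp (|log μ| |u|)` together with
`|u| ^ k ≤ k! n⁻ᵏ exp (n |u|)` gives the growth bound.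
-/

open Finset Module Module.End
open scoped Nat

section ExpPoly

variable {K V : Type*} [CommSemiring K] [AddCommMonoid V] [Module K V]

def expPolyMap (s : Finset (K × ℕ)) : (K × ℕ → V) →ₗ[K] (ℕ → V) :=
  LinearMap.pi fun m => ∑ p ∈ s, (p.1 ^ m * (m : K) ^ p.2) • LinearMap.proj p

@[simp]
lemma expPolyMap_apply (s : Finset (K × ℕ)) (a : K × ℕ → V) (m : ℕ) :
    expPolyMap s a m = ∑ p ∈ s, (p.1 ^ m * (m : K) ^ p.2) • a p := by
  simp [expPolyMap]

lemma mem_range_expPolyMap_of_mem {s : Finset (K × ℕ)} {p : K × ℕ} (hp : p ∈ s) (y : V) :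
    (fun m : ℕ => (p.1 ^ m * (m : K) ^ p.2) • y) ∈ LinearMap.range (expPolyMap s) := by
  classical
  exact ⟨Pi.single p y, by ext m; simp [Pi.single_apply, hp]⟩

end ExpPoly

lemma Module.End.pow_apply_eq_sum_choose {K V : Type*} [CommRing K] [AddCommGroup V] [Module K V]
    {T : End K V} {μ : K} {d : ℕ} {x : V} (hx : ((T - μ • 1) ^ d) x = 0) (m : ℕ) :
    (T ^ m) x = ∑ t ∈ range d, ((m.choose t : K) * μ ^ (m - t)) • ((T - μ • 1) ^ t) x := by
  set N := T - μ • 1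
  have hbinom : (T ^ m) x = ∑ t ∈ range (m + 1), ((m.choose t : K) * μ ^ (m - t)) • (N ^ t) x := by
    rw [show T = N + algebraMap K (End K V) μ by simp [N, Algebra.algebraMap_eq_smul_one],
      (Algebra.commute_algebraMap_right μ N).add_pow, LinearMap.sum_apply]
    refine sum_congr rfl fun t _ => ?_
    rw [mul_apply, mul_apply, natCast_apply, Algebra.algebraMap_eq_smul_one, _root_.smul_pow,
      one_pow, LinearMap.smul_apply, one_apply, map_smul, map_nsmul, mul_smul,
      Nat.cast_smul_eq_nsmul, smul_comm]
  rw [hbinom, sum_subset (range_subset_range.2 (Nat.le_add_right (m + 1) d)),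
    ← sum_subset (range_subset_range.2 (Nat.le_add_left d (m + 1)))]
  · intro t _ ht
    rw [← Nat.sub_add_cancel (not_lt.1 (mem_range.not.1 ht)), pow_add, mul_apply, hx, map_zero,
      smul_zero]
  · intro t _ ht
    rw [Nat.choose_eq_zero_of_lt (not_le.1 fun h => ht (mem_range.2 (Nat.lt_succ_of_le h))),
      Nat.cast_zero, zero_mul, zero_smul]

lemma Nat.cast_choose_mul_pow_sub {K : Type*} [Field K] {μ : K} (hμ : μ ≠ 0) (m t : ℕ) :
    (m.choose t : K) * μ ^ (m - t) = μ ^ m * ((μ ^ t)⁻¹ * m.choose t) := by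
  rcases le_or_gt t m with h | h
  · rw [pow_sub₀ _ hμ h]; ring
  · simp [Nat.choose_eq_zero_of_lt h]

section Field

variable {K V : Type*} [Field K] [CharZero K] [AddCommGroup V] [Module K V]

lemma choose_mul_pow_sub_smul_mem_range_expPolyMap {s : Finset (K × ℕ)} {μ : K} (hμ : μ ≠ 0)
    {d t : ℕ} (hs : ∀ k < d, (μ, k) ∈ s) (ht : t < d) (y : V) :
    (fun m : ℕ => ((m.choose t : K) * μ ^ (m - t)) • y) ∈ LinearMap.range (expPolyMap s) := by
  have hdeg : (descPochhammer K t).natDegree < d := by rwa [descPochhammer_natDegree]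
  have hexp : (fun m : ℕ => ((m.choose t : K) * μ ^ (m - t)) • y) = ∑ k ∈ range d,
      fun m : ℕ => (μ ^ m * (m : K) ^ k) •
        (((μ ^ t)⁻¹ * (descPochhammer K t).coeff k / t !) • y) := by
    ext m
    rw [Finset.sum_apply]
    simp only [smul_smul, ← sum_smul]
    rw [Nat.cast_choose_mul_pow_sub hμ, Nat.cast_choose_eq_descPochhammer_div,
      Polynomial.eval_eq_sum_range' hdeg, sum_div, mul_sum, mul_sum]
    refine congrArg (· • y) (sum_congr rfl fun k _ => by ring)
  rw [hexp]
  exact sum_mem fun k hk => mem_range_expPolyMap_of_mem (hs k (mem_range.1 hk)) _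

lemma Module.End.pow_apply_mem_range_expPolyMap_of_mem_genEigenspace {T : End K V}
    {s : Finset (K × ℕ)} {μ : K} (hμ : μ ≠ 0) {d : ℕ} (hs : ∀ k < d, (μ, k) ∈ s) {x : V}
    (hx : x ∈ T.genEigenspace μ d) :
    (fun m : ℕ => (T ^ m) x) ∈ LinearMap.range (expPolyMap s) := by
  have hexp : (fun m : ℕ => (T ^ m) x) = ∑ t ∈ range d,
      fun m : ℕ => ((m.choose t : K) * μ ^ (m - t)) • ((T - μ • 1) ^ t) x := by
    ext m
    rw [Finset.sum_apply, pow_apply_eq_sum_choose (mem_genEigenspace_nat.1 hx)]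
  rw [hexp]
  exact sum_mem fun t ht => choose_mul_pow_sub_smul_mem_range_expPolyMap hμ hs (mem_range.1 ht) _

theorem Module.End.pow_apply_mem_range_expPolyMap [IsAlgClosed K] [FiniteDimensional K V]
    (T : End K V) (h0 : (0 : K) ∉ spectrum K T) {s : Finset (K × ℕ)}
    (hs : ∀ μ ∈ spectrum K T, ∀ k < finrank K V, (μ, k) ∈ s) (x : V) :
    (fun m : ℕ => (T ^ m) x) ∈ LinearMap.range (expPolyMap s) := by
  suffices h : ⨆ μ, T.maxGenEigenspace μ ≤
      (LinearMap.range (expPolyMap s)).comap (LinearMap.pi fun m => T ^ m) by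
    exact h (T.iSup_maxGenEigenspace_eq_top ▸ Submodule.mem_top)
  refine iSup_le fun μ y hy => ?_
  rw [maxGenEigenspace_eq_genEigenspace_finrank] at hy
  obtain rfl | hy0 := eq_or_ne y 0
  · exact zero_mem _
  have hμ : μ ∈ spectrum K T := by
    rw [← hasEigenvalue_iff_mem_spectrum]
    exact hasEigenvalue_of_hasGenEigenvalue (k := finrank K V)
      ((Submodule.ne_bot_iff _).2 ⟨y, hy, hy0⟩)
  exact pow_apply_mem_range_expPolyMap_of_mem_genEigenspace (ne_of_mem_of_not_mem hμ h0)
    (hs μ hμ) hy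

end Field

namespace Matrix

lemma spectrum_fromBlocks_zero₂₁ {K m n : Type*} [Field K] [Fintype m] [DecidableEq m]
    [Fintype n] [DecidableEq n] (A : Matrix m m K) (B : Matrix m n K) (D : Matrix n n K) :
    spectrum K (fromBlocks A B 0 D) = spectrum K A ∪ spectrum K D := by
  ext μ
  simp [mem_spectrum_iff_isRoot_charpoly, charpoly_fromBlocks_zero₂₁]

lemma fromBlocks_one_pow {R m n : Type*} [Semiring R] [Fintype m] [DecidableEq m]
    [Fintype n] [DecidableEq n] (A : Matrix m m R) (B : Matrix m n R) (k : ℕ) :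
    fromBlocks A B 0 (1 : Matrix n n R) ^ k =
      fromBlocks (A ^ k) (∑ j ∈ range k, A ^ j * B) 0 1 := by
  induction k with
  | zero => simp [fromBlocks_one]
  | succ k ih =>
    rw [pow_succ', ih, fromBlocks_multiply]
    simp [sum_range_succ', pow_succ', Matrix.mul_sum, Matrix.mul_assoc]

theorem exists_pow_mulVec_eq_sum_ofReal_expPoly {ι : Type*} [Fintype ι] [DecidableEq ι]
    (B : Matrix ι ι ℂ) (hB : ∀ μ ∈ spectrum ℂ B, ∃ r : ℝ, r ≠ 0 ∧ μ = r) (w : ι → ℂ) :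
    ∃ (s : Finset (ℝ × ℕ)) (a : ℝ × ℕ → ι → ℂ), (∀ p ∈ s, (p.1 : ℂ) ∈ spectrum ℂ B) ∧
      ∀ m : ℕ, (B ^ m) *ᵥ w = ∑ p ∈ s, ((p.1 : ℂ) ^ m * (m : ℂ) ^ p.2) • a p := by
  let s := B.finite_spectrum.toFinset.image Complex.re ×ˢ range (Fintype.card ι)
  let e : ℝ × ℕ ↪ ℂ × ℕ := .prodMap ⟨_, Complex.ofReal_injective⟩ (.refl ℕ)
  have h0 : (0 : ℂ) ∉ spectrum ℂ (toLin' B) := fun h => by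
    obtain ⟨r, hr, h⟩ := hB 0 (spectrum_toLin' B ▸ h)
    exact hr (Complex.ofReal_eq_zero.1 h.symm)
  have hs : ∀ μ ∈ spectrum ℂ (toLin' B), ∀ k < finrank ℂ (ι → ℂ), (μ, k) ∈ s.map e := by
    intro μ hμ k hk
    rw [spectrum_toLin'] at hμ
    obtain ⟨r, -, rfl⟩ := hB μ hμ
    refine mem_map.2 ⟨(r, k), mem_product.2 ⟨mem_image.2 ⟨r, ?_, Complex.ofReal_re r⟩, ?_⟩, rfl⟩
    · exact B.finite_spectrum.mem_toFinset.2 hμ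
    · simpa using hk
  obtain ⟨a, ha⟩ := Module.End.pow_apply_mem_range_expPolyMap (toLin' B) h0 hs w
  refine ⟨s, fun p => a (e p), fun p hp => ?_, fun m => ?_⟩
  · obtain ⟨μ, hμ, hre⟩ := mem_image.1 (mem_product.1 hp).1
    rw [B.finite_spectrum.mem_toFinset] at hμ
    obtain ⟨r, -, rfl⟩ := hB μ hμ
    rwa [← hre, Complex.ofReal_re]
  · have := congrFun ha m
    simp only [expPolyMap_apply, sum_map] at this
    rw [← toLin'_apply, toLin'_pow, ← this]
    rfl

end Matrix

lemma Complex.norm_exp_mul_ofReal_le (u : ℂ) (x : ℝ) : ‖exp (u * x)‖ ≤ Real.exp (|x| * ‖u‖) := by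
  rw [norm_exp, mul_re, ofReal_re, ofReal_im, mul_zero, sub_zero, Real.exp_le_exp]
  calc u.re * x ≤ |u.re| * |x| := by rw [← abs_mul]; exact le_abs_self _
    _ ≤ |x| * ‖u‖ := by rw [mul_comm]; gcongr; exact abs_re_le_norm u

lemma Real.pow_le_factorial_div_pow_mul_exp {t c : ℝ} (ht : 0 ≤ t) (hc : 0 < c) (k : ℕ) :
    t ^ k ≤ k ! / c ^ k * exp (c * t) := by
  have h := pow_div_factorial_le_exp (x := c * t) (mul_nonneg hc.le ht) k
  rw [div_le_iff₀ (by positivity), mul_pow] at h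
  rw [div_mul_eq_mul_div, le_div_iff₀ (by positivity)]
  linarith

theorem exists_norm_sum_exp_mul_pow_smul_le {E : Type*} [SeminormedAddCommGroup E]
    [NormedSpace ℂ E] (s : Finset (ℝ × ℕ)) (a : ℝ × ℕ → E) {L c : ℝ} (hc : 0 < c)
    (hL : ∀ p ∈ s, |Real.log p.1| ≤ L) :
    ∃ C, 0 < C ∧ ∀ u : ℂ, ‖∑ p ∈ s, (Complex.exp (u * Real.log p.1) * u ^ p.2) • a p‖ ≤
      C * Real.exp ((L + c) * ‖u‖) := by
  refine ⟨1 + ∑ p ∈ s, p.2 ! / c ^ p.2 * ‖a p‖, by positivity, fun u => ?_⟩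
  have hterm : ∀ p ∈ s, ‖(Complex.exp (u * Real.log p.1) * u ^ p.2) • a p‖ ≤
      p.2 ! / c ^ p.2 * ‖a p‖ * Real.exp ((L + c) * ‖u‖) := fun p hp => by
    rw [norm_smul, norm_mul, norm_pow]
    calc _ ≤ Real.exp (L * ‖u‖) * (p.2 ! / c ^ p.2 * Real.exp (c * ‖u‖)) * ‖a p‖ := by
          gcongr
          · exact (Complex.norm_exp_mul_ofReal_le u _).trans (by gcongr; exact hL p hp)
          · exact Real.pow_le_factorial_div_pow_mul_exp (norm_nonneg u) hc _
      _ = _ := by rw [add_mul, Real.exp_add]; ring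
  calc _ ≤ ∑ p ∈ s, ‖(Complex.exp (u * Real.log p.1) * u ^ p.2) • a p‖ := norm_sum_le _ _
    _ ≤ ∑ p ∈ s, p.2 ! / c ^ p.2 * ‖a p‖ * Real.exp ((L + c) * ‖u‖) := sum_le_sum hterm
    _ ≤ _ := by rw [← sum_mul]; gcongr; linarith

/-- For a matrix `A` with all eigenvalues positive reals, the partial geometric sums
`Σ_{j<u} A^j v`, written in exponential-polynomial form `Σ a_{st} λ_s^u u^t` with
`λ_s > 0`, extend to an analytic function of `u ∈ ℂ` (replacing `λ_s^u` by
`exp(u log λ_s)`) bounded by `a·exp(b|u|)` with `b = max_s |log λ_s| + n`. -/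
theorem geom_sum_analytic_extension (n : ℕ) (A : Matrix (Fin n) (Fin n) ℂ)
    (hA : ∀ μ ∈ spectrum ℂ A, ∃ r : ℝ, 0 < r ∧ μ = (r : ℂ)) (v : Fin n → ℂ) :
    ∃ (s : Finset (ℝ × ℕ)) (a : ℝ × ℕ → (Fin n → ℂ)),
      (∀ p ∈ s, 0 < p.1) ∧
      (∀ m : ℕ, (∑ j ∈ Finset.range m, (A ^ j).mulVec v) =
        ∑ p ∈ s, (((p.1 : ℂ)) ^ m * (m : ℂ) ^ p.2) • a p) ∧
      Differentiable ℂ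
        (fun u : ℂ => ∑ p ∈ s, (Complex.exp (u * Real.log p.1) * u ^ p.2) • a p) ∧
      ∃ a0 : ℝ, 0 < a0 ∧ ∀ u : ℂ,
        ‖∑ p ∈ s, (Complex.exp (u * Real.log p.1) * u ^ p.2) • a p‖ ≤
          a0 * Real.exp
            ((sSup ((fun μ : ℂ => |Real.log μ.re|) '' spectrum ℂ A) + n) * ‖u‖) := by
  set S := sSup ((fun μ : ℂ => |Real.log μ.re|) '' spectrum ℂ A)
  set B := Matrix.fromBlocks A (Matrix.replicateCol Unit v) 0 (1 : Matrix Unit Unit ℂ)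
  have hB : ∀ μ ∈ spectrum ℂ B, ∃ r : ℝ, 0 < r ∧ |Real.log r| ≤ S ∧ μ = r := by
    intro μ hμ
    rw [Matrix.spectrum_fromBlocks_zero₂₁, spectrum.one_eq] at hμ
    rcases hμ with hμ | rfl
    · obtain ⟨r, hr, rfl⟩ := hA μ hμ
      exact ⟨r, hr, le_csSup (A.finite_spectrum.image _).bddAbove ⟨r, hμ, by simp⟩, rfl⟩
    · refine ⟨1, one_pos, ?_, by simp⟩
      simpa using Real.sSup_nonneg (by rintro _ ⟨μ, -, rfl⟩; positivity)
  obtain ⟨s, a, hs, hpow⟩ := B.exists_pow_mulVec_eq_sum_ofReal_expPoly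
    (fun μ hμ => (hB μ hμ).imp fun r hr => ⟨hr.1.ne', hr.2.2⟩) (Pi.single (Sum.inr ()) 1)
  have hbase : ∀ p ∈ s, 0 < p.1 ∧ |Real.log p.1| ≤ S := fun p hp => by
    obtain ⟨r, hr, hlog, h⟩ := hB _ (hs p hp)
    rw [Complex.ofReal_inj.1 h]
    exact ⟨hr, hlog⟩
  refine ⟨s, fun p i => a p (Sum.inl i), fun p hp => (hbase p hp).1, fun m => ?_, by fun_prop, ?_⟩
  · ext i
    simpa [B, Matrix.fromBlocks_one_pow, Matrix.mulVec_single_one, Matrix.sum_apply,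
      Matrix.mul_apply, Matrix.mulVec, dotProduct] using congrFun (hpow m) (Sum.inl i)
  · obtain rfl | hn := n.eq_zero_or_pos
    · exact ⟨1, one_pos, fun u => by rw [norm_of_subsingleton]; positivity⟩
    · exact exists_norm_sum_exp_mul_pow_smul_le s _ (Nat.cast_pos.2 hn) fun p hp => (hbase p hp).2
end
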